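/- Let E be a real inner product space and n ∈ E a unit vector. For x ∈ E, write x_n = ⟪x, n⟫ (normal component) and x_τ = x − ⟪x, n⟫ • n (tangential part). For g ≥ 0 let C(n,g) = {x ∈ E : x_n ≥ 0 and ‖x_τ‖ ≤ g}. Then for all λ, j ∈ E the following are equivalent: (i) λ ∈ C(n,g) and ⟪μ − λ, j⟫ ≤ 0 for all μ ∈ C(n,g); (ii) λ_n ≥ 0, j_n ≤ 0, λ_n · j_n = 0, ‖λ_τ‖ ≤ g, and ⟪λ_τ, j_τ⟫ = g‖j_τ‖. -/

import Mathlib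

/-! The inner product splits as `⟪x, y⟫ = xₙ yₙ + ⟪x_τ, y_τ⟫`, and `C(n,g)` is the product of the
half-line `{xₙ ≥ 0}` with the ball of radius `g` in `nᗮ`. A variational inequality over a product
decouples into one per factor: over the half-line it is the complementarity `λₙ ≥ 0, jₙ ≤ 0,
λₙ jₙ = 0`, and over the ball it says that `λ_τ` attains the support function `g ‖j_τ‖` of the ball
in the direction `j_τ`, with the maximiser `(g / ‖j_τ‖) j_τ` as witness for the nontrivial half. -/

open scoped RealInnerProductSpace

lemma nonneg_variational_inequality_iff {a c : ℝ} :
    (0 ≤ a ∧ ∀ b : ℝ, 0 ≤ b → (b - a) * c ≤ 0) ↔ 0 ≤ a ∧ c ≤ 0 ∧ a * c = 0 := by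
  constructor
  · rintro ⟨ha, hvi⟩
    have hc : c ≤ 0 := by nlinarith [hvi (a + 1) (by linarith)]
    exact ⟨ha, hc, le_antisymm (mul_nonpos_of_nonneg_of_nonpos ha hc) (by nlinarith [hvi 0 le_rfl])⟩
  · rintro ⟨ha, hc, hac⟩
    exact ⟨ha, fun b hb => by nlinarith [mul_nonpos_of_nonneg_of_nonpos hb hc]⟩

section InnerProductSpace

variable {E : Type*} [NormedAddCommGroup E] [InnerProductSpace ℝ E]

lemma forall_mem_closedBall_inner_sub_nonpos_iff {K : Submodule ℝ E} {g : ℝ} {u t : E}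
    (hu : ‖u‖ ≤ g) (ht : t ∈ K) :
    (∀ v ∈ K, ‖v‖ ≤ g → ⟪v - u, t⟫ ≤ 0) ↔ ⟪u, t⟫ = g * ‖t‖ := by
  have hcs : ∀ v : E, ‖v‖ ≤ g → ⟪v, t⟫ ≤ g * ‖t‖ := fun v hv =>
    (real_inner_le_norm v t).trans (mul_le_mul_of_nonneg_right hv (norm_nonneg t))
  constructor
  · intro hvi
    refine le_antisymm (hcs u hu) ?_
    rcases eq_or_ne t 0 with rfl | ht0
    · simp
    have htpos : 0 < ‖t‖ := norm_pos_iff.mpr ht0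
    have hg : 0 ≤ g := (norm_nonneg u).trans hu
    have hmax := hvi ((g / ‖t‖) • t) (K.smul_mem _ ht) (by
      rw [norm_smul, Real.norm_of_nonneg (div_nonneg hg htpos.le), div_mul_cancel₀ g htpos.ne'])
    rw [inner_sub_left, real_inner_smul_left, real_inner_self_eq_norm_sq] at hmax
    have : g / ‖t‖ * ‖t‖ ^ 2 = g * ‖t‖ := by field_simp
    linarith
  · intro heq v _ hv
    rw [inner_sub_left, heq]
    linarith [hcs v hv]

variable {n : E}

lemma sub_inner_smul_mem_orthogonal (hn : ‖n‖ = 1) (x : E) :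
    x - ⟪x, n⟫ • n ∈ (ℝ ∙ n)ᗮ := by
  rw [Submodule.mem_orthogonal_singleton_iff_inner_left, inner_sub_left, real_inner_smul_left,
    inner_self_eq_one_of_norm_eq_one hn, mul_one, sub_self]

lemma inner_eq_inner_mul_inner_add_inner_sub_inner_smul (hn : ‖n‖ = 1) (x y : E) :
    ⟪x, y⟫ = ⟪x, n⟫ * ⟪y, n⟫ + ⟪x - ⟪x, n⟫ • n, y - ⟪y, n⟫ • n⟫ := by
  simp only [inner_sub_left, inner_sub_right, real_inner_smul_left, real_inner_smul_right,
    inner_self_eq_one_of_norm_eq_one hn, real_inner_comm n y]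
  ring

lemma inner_smul_add_of_mem_orthogonal (hn : ‖n‖ = 1) (a : ℝ) {v : E} (hv : v ∈ (ℝ ∙ n)ᗮ) :
    ⟪a • n + v, n⟫ = a := by
  rw [Submodule.mem_orthogonal_singleton_iff_inner_left] at hv
  rw [inner_add_left, real_inner_smul_left, inner_self_eq_one_of_norm_eq_one hn, hv, mul_one,
    add_zero]

lemma smul_add_sub_inner_smul_of_mem_orthogonal (hn : ‖n‖ = 1) (a : ℝ) {v : E}
    (hv : v ∈ (ℝ ∙ n)ᗮ) : a • n + v - ⟪a • n + v, n⟫ • n = v := by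
  rw [inner_smul_add_of_mem_orthogonal hn a hv, add_sub_cancel_left]

lemma inner_sub_eq_normal_add_tangential (hn : ‖n‖ = 1) (μ lam j : E) :
    ⟪μ - lam, j⟫ = (⟪μ, n⟫ - ⟪lam, n⟫) * ⟪j, n⟫ +
      ⟪(μ - ⟪μ, n⟫ • n) - (lam - ⟪lam, n⟫ • n), j - ⟪j, n⟫ • n⟫ := by
  rw [inner_sub_left, inner_sub_left, inner_eq_inner_mul_inner_add_inner_sub_inner_smul hn μ,
    inner_eq_inner_mul_inner_add_inner_sub_inner_smul hn lam]
  ring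

/-- The two test vectors `b • n + λ_τ` and `λₙ • n + v` lie in `C(n,g)` and vary only one
component of `λ`. -/
lemma forall_tresca_inner_sub_nonpos_iff (hn : ‖n‖ = 1) {g : ℝ} {lam : E}
    (hln : 0 ≤ ⟪lam, n⟫) (hlt : ‖lam - ⟪lam, n⟫ • n‖ ≤ g) (j : E) :
    (∀ μ : E, (0 ≤ ⟪μ, n⟫ ∧ ‖μ - ⟪μ, n⟫ • n‖ ≤ g) → ⟪μ - lam, j⟫ ≤ 0) ↔
      (∀ b : ℝ, 0 ≤ b → (b - ⟪lam, n⟫) * ⟪j, n⟫ ≤ 0) ∧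
      ∀ v ∈ (ℝ ∙ n)ᗮ, ‖v‖ ≤ g → ⟪v - (lam - ⟪lam, n⟫ • n), j - ⟪j, n⟫ • n⟫ ≤ 0 := by
  have hlam_t := sub_inner_smul_mem_orthogonal hn lam
  simp only [inner_sub_eq_normal_add_tangential hn _ lam j]
  constructor
  · intro hvi
    refine ⟨fun b hb => ?_, fun v hv hvg => ?_⟩
    · have := hvi (b • n + (lam - ⟪lam, n⟫ • n))
      rw [smul_add_sub_inner_smul_of_mem_orthogonal hn b hlam_t,
        inner_smul_add_of_mem_orthogonal hn b hlam_t, sub_self, inner_zero_left, add_zero] at this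
      exact this ⟨hb, hlt⟩
    · have := hvi (⟪lam, n⟫ • n + v)
      rw [smul_add_sub_inner_smul_of_mem_orthogonal hn _ hv,
        inner_smul_add_of_mem_orthogonal hn _ hv, sub_self, zero_mul, zero_add] at this
      exact this ⟨hln, hvg⟩
  · rintro ⟨hnormal, htangential⟩ μ ⟨hμn, hμt⟩
    exact add_nonpos (hnormal _ hμn) (htangential _ (sub_inner_smul_mem_orthogonal hn μ) hμt)

end InnerProductSpace

theorem tresca_variational_inequality_iff_complementarity_general
    {E : Type*} [NormedAddCommGroup E] [InnerProductSpace ℝ E]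
    (n : E) (hn : ‖n‖ = 1) (g : ℝ) (lam j : E) :
    ((0 ≤ ⟪lam, n⟫ ∧ ‖lam - ⟪lam, n⟫ • n‖ ≤ g) ∧
        ∀ μ : E, (0 ≤ ⟪μ, n⟫ ∧ ‖μ - ⟪μ, n⟫ • n‖ ≤ g) → ⟪μ - lam, j⟫ ≤ 0) ↔
      (0 ≤ ⟪lam, n⟫ ∧ ⟪j, n⟫ ≤ 0 ∧ ⟪lam, n⟫ * ⟪j, n⟫ = 0 ∧
        ‖lam - ⟪lam, n⟫ • n‖ ≤ g ∧
        ⟪lam - ⟪lam, n⟫ • n, j - ⟪j, n⟫ • n⟫ = g * ‖j - ⟪j, n⟫ • n‖) := by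
  have hjt := sub_inner_smul_mem_orthogonal hn j
  constructor
  · rintro ⟨⟨hln, hlt⟩, hvi⟩
    obtain ⟨hnormal, htangential⟩ := (forall_tresca_inner_sub_nonpos_iff hn hln hlt j).1 hvi
    obtain ⟨-, hjn, hcomp⟩ := nonneg_variational_inequality_iff.1 ⟨hln, hnormal⟩
    exact ⟨hln, hjn, hcomp, hlt,
      (forall_mem_closedBall_inner_sub_nonpos_iff hlt hjt).1 htangential⟩
  · rintro ⟨hln, hjn, hcomp, hlt, hfriction⟩
    refine ⟨⟨hln, hlt⟩, (forall_tresca_inner_sub_nonpos_iff hn hln hlt j).2 ⟨?_, ?_⟩⟩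
    · exact (nonneg_variational_inequality_iff.2 ⟨hln, hjn, hcomp⟩).2
    · exact (forall_mem_closedBall_inner_sub_nonpos_iff hlt hjt).2 hfriction

/-- Facewise decoupling of the discrete variational inequality: membership of
`λ` in the Tresca admissible set `C(n,g)` together with the variational
inequality `⟪μ - λ, j⟫ ≤ 0` for all `μ ∈ C(n,g)` is equivalent to the
Signorini complementarity conditions and the Tresca friction conditions. -/
theorem tresca_variational_inequality_iff_complementarity
    {E : Type*} [NormedAddCommGroup E] [InnerProductSpace ℝ E]
    (n : E) (hn : ‖n‖ = 1) (g : ℝ) (hg : 0 ≤ g) (lam j : E) :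
    ((0 ≤ ⟪lam, n⟫ ∧ ‖lam - ⟪lam, n⟫ • n‖ ≤ g) ∧
        ∀ μ : E, (0 ≤ ⟪μ, n⟫ ∧ ‖μ - ⟪μ, n⟫ • n‖ ≤ g) → ⟪μ - lam, j⟫ ≤ 0) ↔
      (0 ≤ ⟪lam, n⟫ ∧ ⟪j, n⟫ ≤ 0 ∧ ⟪lam, n⟫ * ⟪j, n⟫ = 0 ∧
        ‖lam - ⟪lam, n⟫ • n‖ ≤ g ∧
        ⟪lam - ⟪lam, n⟫ • n, j - ⟪j, n⟫ • n⟫ = g * ‖j - ⟪j, n⟫ • n‖) :=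
  tresca_variational_inequality_iff_complementarity_general n hn g lam j
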